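/- arXiv:2602.22435 — 6 statements merged into one kernel-verified Lean document; each statement's English description precedes it below -/
import Mathlib

section
/- Let p be an odd prime, K an algebraically closed field of characteristic p, and d₁ > d₂ ≥ 1 integers with p ∤ d₁. Set N = d₁(p−1). Let R be the polynomial ring over K in variables a_i for 1 ≤ i ≤ d₁−1 with p ∤ i and variables b_i for 1 ≤ i ≤ d₂ with p ∤ i. For each α ∈ K with α^N = 1, let φ_α : R → R be the K-algebra automorphism determined by a_i ↦ α^{i−d₁}·a_i and b_i ↦ α^{−i−d₁}·b_i. Then the subalgebra {f ∈ R : φ_α(f) = f for all α ∈ K with α^N = 1} is equal to the K-subalgebra of R generated by the monomials ∏ a_i^{k_i} · ∏ b_i^{n_i} satisfying Σ k_i + Σ n_i ≤ d₁(p−1) and Σ k_i(i−d₁) − Σ n_i(i+d₁) ≡ 0 (mod d₁(p−1)). -/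
/-!
Twisting `x_v ↦ α ^ W v • x_v` multiplies the coefficient of a monomial by `α` to the power of
its weight, so testing against a primitive `N`-th root of unity (which exists because `p ∤ N`)
shows that a polynomial is invariant iff each of its monomials has weight divisible by `N`.
Such a monomial of degree `> N` has a proper nonempty factor of degree `≤ N` and weight
divisible by `N`: list its variables with multiplicity; two of the first `N + 1` prefix sums of
their weights agree mod `N`. Induction on the degree then shows that the invariant monomials of
degree `≤ N` generate all invariants.
-/

open MvPolynomial Finsupp

theorem List.exists_infix_length_le_card_sum_map_eq_zero {α G : Type*} [AddCommGroup G]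
    [Fintype G] (f : α → G) (l : List α) (hl : Fintype.card G < l.length) :
    ∃ t, t <:+: l ∧ t ≠ [] ∧ t.length ≤ Fintype.card G ∧ (t.map f).sum = 0 := by
  -- two of the `card G + 1` prefix sums `∑_{k < j} f l[k]`, `j ≤ card G`, coincide
  obtain ⟨j, j', hne, heq⟩ := Fintype.exists_ne_map_eq_of_card_lt
    (fun j : Fin (Fintype.card G + 1) => ((l.take j).map f).sum) (by simp)
  wlog hlt : j < j' generalizing j j'
  · exact this j' j hne.symm heq.symm (lt_of_le_of_ne (not_lt.1 hlt) hne.symm)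
  have hj' : (j' : ℕ) ≤ Fintype.card G := Nat.lt_succ_iff.1 j'.isLt
  refine ⟨(l.drop j).take (j' - j), ((l.drop j).take_prefix _).isInfix.trans
    (l.drop_suffix j).isInfix, ?_, ?_, ?_⟩
  · simp only [ne_eq, List.take_eq_nil_iff, List.drop_eq_nil_iff, not_or]
    omega
  · simp only [List.length_take]
    omega
  · have hsplit : l.take j' = l.take j ++ (l.drop j).take (j' - j) := by
      rw [← List.take_add, Nat.add_sub_cancel' hlt.le]
    simpa [hsplit] using heq

theorem Multiset.weight_toFinsupp {σ M : Type*} [DecidableEq σ] [AddCommMonoid M] (w : σ → M)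
    (s : Multiset σ) : weight w (toFinsupp s) = (s.map w).sum := by
  conv_rhs => rw [← Multiset.toFinsupp_toMultiset s]
  rw [toMultiset_map, sum_toMultiset, sum_mapDomain_index zero_nsmul add_nsmul, weight_apply]

theorem Finsupp.exists_le_degree_le_card_weight_eq_zero {σ G : Type*} [AddCommGroup G]
    [Fintype G] (w : σ → G) (m : σ →₀ ℕ) (hm : Fintype.card G < degree m) :
    ∃ m' ≤ m, m' ≠ 0 ∧ degree m' ≤ Fintype.card G ∧ weight w m' = 0 := by
  classical
  set l := (toMultiset m).toList
  have hml : m = Multiset.toFinsupp l := by simp [l]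
  have hdeg : ∀ s : Multiset σ, degree (Multiset.toFinsupp s) = Multiset.card s :=
    Multiset.toFinsupp_sum_eq
  obtain ⟨t, htl, ht, htG, ht0⟩ := l.exists_infix_length_le_card_sum_map_eq_zero w
    (by rwa [hml, hdeg, Multiset.coe_card] at hm)
  refine ⟨Multiset.toFinsupp t, ?_, ?_, ?_, ?_⟩
  · rw [hml]
    exact orderIsoMultiset.symm.monotone (Multiset.coe_le.2 htl.sublist.subperm)
  · simpa [← degree_eq_zero_iff, hdeg] using ht
  · rwa [hdeg]
  · rwa [Multiset.weight_toFinsupp]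

theorem zpow_sum₀ {ι G₀ : Type*} [CommGroupWithZero G₀] {a : G₀} (ha : a ≠ 0) (s : Finset ι)
    (z : ι → ℤ) : a ^ ∑ i ∈ s, z i = ∏ i ∈ s, a ^ z i := by
  induction s using Finset.cons_induction with
  | empty => simp
  | cons i s hi ih => rw [Finset.sum_cons, zpow_add₀ ha, ih, Finset.prod_cons]

namespace MvPolynomial

variable {σ R K : Type*} (W : σ → ℤ) (N : ℕ)

section Twist

variable [Field K]

noncomputable def weightTwist (α : K) : MvPolynomial σ K →ₐ[K] MvPolynomial σ K :=
  aeval fun v => α ^ W v • X v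

variable {W} {α : K}

theorem weightTwist_monomial (hα : α ≠ 0) (m : σ →₀ ℕ) (a : K) :
    weightTwist W α (monomial m a) = α ^ weight W m • monomial m a := by
  have hprod : ∏ v ∈ m.support, (α ^ W v) ^ m v = α ^ weight W m := by
    rw [weight_apply, Finsupp.sum, zpow_sum₀ hα]
    refine Finset.prod_congr rfl fun v _ => ?_
    rw [nsmul_eq_mul, mul_comm, zpow_mul, zpow_natCast]
  simp only [weightTwist, aeval_monomial, smul_pow, Finsupp.prod, Finset.prod_smul]
  rw [hprod, monomial_eq, Finsupp.prod, algebraMap_eq, mul_smul_comm]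

theorem coeff_weightTwist (hα : α ≠ 0) (f : MvPolynomial σ K) (m : σ →₀ ℕ) :
    coeff m (weightTwist W α f) = α ^ weight W m * coeff m f := by
  classical
  induction f using MvPolynomial.induction_on' with
  | monomial m' a =>
    rw [weightTwist_monomial hα, coeff_smul, coeff_monomial, smul_eq_mul]
    split_ifs with h
    · rw [h]
    · rw [mul_zero, mul_zero]
  | add f g hf hg => rw [map_add, coeff_add, coeff_add, hf, hg, mul_add]

theorem zpow_weight_eq_one_of_weightTwist_eq_self (hα : α ≠ 0) {f : MvPolynomial σ K}
    (hf : weightTwist W α f = f) {m : σ →₀ ℕ} (hm : m ∈ f.support) : α ^ weight W m = 1 := by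
  have := congr_arg (coeff m) hf
  rw [coeff_weightTwist hα] at this
  exact mul_right_cancel₀ (mem_support_iff.1 hm) (this.trans (one_mul _).symm)

end Twist

def invariantMonomials [CommSemiring R] : Set (MvPolynomial σ R) :=
  {monomial m 1 | (m : σ →₀ ℕ) (_ : degree m ≤ N ∧ (N : ℤ) ∣ weight W m)}

theorem monomial_mem_adjoin_invariantMonomials [CommSemiring R] [NeZero N] (m : σ →₀ ℕ)
    (hm : (N : ℤ) ∣ weight W m) :
    monomial m (1 : R) ∈ Algebra.adjoin R (invariantMonomials W N) := by
  induction hd : degree m using Nat.strong_induction_on generalizing m with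
  | _ d ih =>
    by_cases hmN : degree m ≤ N
    · exact Algebra.subset_adjoin ⟨m, ⟨hmN, hm⟩, rfl⟩
    obtain ⟨m₁, hm₁m, hm₁, hm₁N, hw₁⟩ :=
      exists_le_degree_le_card_weight_eq_zero (fun v => (W v : ZMod N)) m
        (by rw [ZMod.card]; omega)
    have hdvd₁ : (N : ℤ) ∣ weight W m₁ := by
      rw [← ZMod.intCast_zmod_eq_zero_iff_dvd, ← hw₁]
      simp [weight_apply, Finsupp.sum]
    obtain ⟨m₂, rfl⟩ := exists_add_of_le hm₁m
    rw [map_add] at hm hd hmN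
    rw [ZMod.card] at hm₁N
    have hpos : 0 < degree m₁ := Nat.pos_of_ne_zero ((degree_eq_zero_iff _).not.2 hm₁)
    rw [← mul_one (1 : R), ← monomial_mul]
    exact mul_mem (ih _ (by omega) m₁ hdvd₁ rfl)
      (ih _ (by omega) m₂ ((dvd_add_right hdvd₁).1 hm) rfl)

variable [Field K]

theorem adjoin_invariantMonomials_le_equalizer [NeZero N] {α : K} (hα : α ^ N = 1) :
    Algebra.adjoin K (invariantMonomials W N) ≤
      AlgHom.equalizer (weightTwist W α) (AlgHom.id K _) := by
  rw [Algebra.adjoin_le_iff]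
  rintro _ ⟨m, ⟨-, q, hq⟩, rfl⟩
  rw [SetLike.mem_coe, AlgHom.mem_equalizer, weightTwist_monomial (ne_zero_pow (NeZero.ne N)
    (hα ▸ one_ne_zero)), hq, zpow_mul, zpow_natCast, hα, one_zpow, one_smul, AlgHom.id_apply]

theorem setOf_forall_weightTwist_eq_self [NeZero N] {ζ : K} (hζ : IsPrimitiveRoot ζ N) :
    {f : MvPolynomial σ K | ∀ α : K, α ^ N = 1 → weightTwist W α f = f} =
      ↑(Algebra.adjoin K (invariantMonomials (R := K) W N)) := by
  ext f
  refine ⟨fun hf => ?_, fun hf α hα => adjoin_invariantMonomials_le_equalizer W N hα hf⟩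
  rw [f.as_sum]
  refine Subalgebra.sum_mem _ fun m hm => ?_
  rw [← mul_one (coeff m f), ← smul_eq_mul, ← smul_monomial]
  refine Subalgebra.smul_mem _ (monomial_mem_adjoin_invariantMonomials W N m ?_) _
  exact (hζ.zpow_eq_one_iff_dvd _).1 <| zpow_weight_eq_one_of_weightTwist_eq_self
    (hζ.ne_zero (NeZero.ne N)) (hf ζ hζ.pow_eq_one) hm

end MvPolynomial

theorem MvPolynomial.monomial_one_eq_prod_inl_mul_prod_inr {σ τ R : Type*} [Fintype σ]
    [Fintype τ] [CommSemiring R] (m : σ ⊕ τ →₀ ℕ) :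
    monomial m (1 : R) = (∏ i, X (.inl i) ^ m (.inl i)) * ∏ j, X (.inr j) ^ m (.inr j) := by
  rw [monomial_eq, C_1, one_mul, Finsupp.prod_fintype _ _ fun _ => pow_zero _,
    Fintype.prod_sum_type]

theorem Finsupp.degree_eq_sum_inl_add_sum_inr {σ τ : Type*} [Fintype σ] [Fintype τ]
    (m : σ ⊕ τ →₀ ℕ) : degree m = ∑ i, m (.inl i) + ∑ j, m (.inr j) := by
  rw [degree_eq_sum, Fintype.sum_sum_type]

def twoPoleWeight (d : ℕ) (SA SB : Finset ℕ) : {i // i ∈ SA} ⊕ {i // i ∈ SB} → ℤ :=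
  Sum.elim (fun i => (i : ℤ) - d) (fun i => -(i : ℤ) - d)

theorem weight_twoPoleWeight (d : ℕ) (SA SB : Finset ℕ)
    (m : {i // i ∈ SA} ⊕ {i // i ∈ SB} →₀ ℕ) :
    weight (twoPoleWeight d SA SB) m =
      ∑ i : {i // i ∈ SA}, (m (.inl i) : ℤ) * ((i : ℤ) - d) -
        ∑ i : {i // i ∈ SB}, (m (.inr i) : ℤ) * ((i : ℤ) + d) := by
  simp only [weight_eq_sum, Fintype.sum_sum_type, twoPoleWeight, Sum.elim_inl, Sum.elim_inr,
    nsmul_eq_mul]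
  rw [sub_eq_add_neg, ← Finset.sum_neg_distrib]
  congr 1
  exact Finset.sum_congr rfl fun i _ => by ring

theorem stmt1_general (p : ℕ) (hp : p.Prime)
    (K : Type*) [Field K] [IsAlgClosed K] [CharP K p]
    (d₁ d₂ : ℕ) (hd : d₁ > d₂) (hpd : ¬ p ∣ d₁)
    (SA SB : Finset ℕ)
    (N : ℕ) (hN : N = d₁ * (p - 1)) :
    {f : MvPolynomial ({i // i ∈ SA} ⊕ {i // i ∈ SB}) K |
        ∀ α : K, α ^ N = 1 →
          MvPolynomial.aeval
            (fun v : {i // i ∈ SA} ⊕ {i // i ∈ SB} =>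
              Sum.elim
                (fun i : {i // i ∈ SA} =>
                  (α ^ ((i : ℤ) - (d₁ : ℤ))) •
                    (MvPolynomial.X (Sum.inl i) :
                      MvPolynomial ({i // i ∈ SA} ⊕ {i // i ∈ SB}) K))
                (fun i : {i // i ∈ SB} =>
                  (α ^ (-(i : ℤ) - (d₁ : ℤ))) •
                    (MvPolynomial.X (Sum.inr i) :
                      MvPolynomial ({i // i ∈ SA} ⊕ {i // i ∈ SB}) K)) v) f
            = f}
      = (Algebra.adjoin K
          {f : MvPolynomial ({i // i ∈ SA} ⊕ {i // i ∈ SB}) K |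
            ∃ k : {i // i ∈ SA} → ℕ, ∃ n : {i // i ∈ SB} → ℕ,
              (f = (∏ i : {i // i ∈ SA}, MvPolynomial.X (Sum.inl i) ^ k i) *
                    ∏ i : {i // i ∈ SB}, MvPolynomial.X (Sum.inr i) ^ n i) ∧
              (∑ i : {i // i ∈ SA}, k i) + (∑ i : {i // i ∈ SB}, n i) ≤ d₁ * (p - 1) ∧
              ((d₁ * (p - 1) : ℤ)) ∣
                ((∑ i : {i // i ∈ SA}, (k i : ℤ) * ((i : ℤ) - (d₁ : ℤ))) -
                  ∑ i : {i // i ∈ SB}, (n i : ℤ) * ((i : ℤ) + (d₁ : ℤ)))} : Set _) := by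
  have hp2 := hp.two_le
  have : NeZero N := ⟨hN ▸ Nat.mul_ne_zero (by omega) (by omega)⟩
  have hpN : ¬ p ∣ N := by
    rw [hN]
    intro h
    rcases hp.dvd_mul.1 h with h | h
    exacts [hpd h, absurd (Nat.le_of_dvd (by omega) h) (by omega)]
  have : NeZero (N : K) := ⟨by rwa [Ne, CharP.cast_eq_zero_iff K p]⟩
  obtain ⟨ζ, hζ⟩ := HasEnoughRootsOfUnity.exists_primitiveRoot K N
  have hNZ : (N : ℤ) = d₁ * (p - 1) := by
    rw [hN, Nat.cast_mul, Nat.cast_sub (by omega), Nat.cast_one]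
  convert setOf_forall_weightTwist_eq_self (twoPoleWeight d₁ SA SB) N hζ using 7
  · congr 1
    funext v
    cases v <;> rfl
  · ext g
    constructor
    · rintro ⟨k, n, rfl, hdeg, hdvd⟩
      obtain ⟨m, rfl, rfl⟩ : ∃ m : {i // i ∈ SA} ⊕ {i // i ∈ SB} →₀ ℕ,
          (fun i => m (.inl i)) = k ∧ (fun j => m (.inr j)) = n :=
        ⟨equivFunOnFinite.symm (Sum.elim k n), rfl, rfl⟩
      refine ⟨m, ⟨?_, ?_⟩, monomial_one_eq_prod_inl_mul_prod_inr m⟩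
      · rwa [degree_eq_sum_inl_add_sum_inr, hN]
      · rwa [weight_twoPoleWeight, hNZ]
    · rintro ⟨m, ⟨hdeg, hdvd⟩, rfl⟩
      refine ⟨_, _, monomial_one_eq_prod_inl_mul_prod_inr m, ?_, ?_⟩
      · rwa [degree_eq_sum_inl_add_sum_inr, hN] at hdeg
      · rwa [weight_twoPoleWeight, hNZ] at hdvd

/-- invariants of the two-pole standard form with distinct pole orders
`d₁ > d₂`. The variables `Sum.inl i` are the coefficients `a_i` and the variables
`Sum.inr i` are the coefficients `b_i`. -/
theorem stmt1 (p : ℕ) (hp : p.Prime) (hodd : Odd p)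
    (K : Type*) [Field K] [IsAlgClosed K] [CharP K p]
    (d₁ d₂ : ℕ) (hd : d₁ > d₂) (hd2 : 1 ≤ d₂) (hpd : ¬ p ∣ d₁)
    (SA SB : Finset ℕ)
    (hSA : SA = (Finset.Icc 1 (d₁ - 1)).filter (fun i => ¬ p ∣ i))
    (hSB : SB = (Finset.Icc 1 d₂).filter (fun i => ¬ p ∣ i))
    (N : ℕ) (hN : N = d₁ * (p - 1)) :
    {f : MvPolynomial ({i // i ∈ SA} ⊕ {i // i ∈ SB}) K |
        ∀ α : K, α ^ N = 1 →
          MvPolynomial.aeval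
            (fun v : {i // i ∈ SA} ⊕ {i // i ∈ SB} =>
              Sum.elim
                (fun i : {i // i ∈ SA} =>
                  (α ^ ((i : ℤ) - (d₁ : ℤ))) •
                    (MvPolynomial.X (Sum.inl i) :
                      MvPolynomial ({i // i ∈ SA} ⊕ {i // i ∈ SB}) K))
                (fun i : {i // i ∈ SB} =>
                  (α ^ (-(i : ℤ) - (d₁ : ℤ))) •
                    (MvPolynomial.X (Sum.inr i) :
                      MvPolynomial ({i // i ∈ SA} ⊕ {i // i ∈ SB}) K)) v) f
            = f}
      = (Algebra.adjoin K
          {f : MvPolynomial ({i // i ∈ SA} ⊕ {i // i ∈ SB}) K |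
            ∃ k : {i // i ∈ SA} → ℕ, ∃ n : {i // i ∈ SB} → ℕ,
              (f = (∏ i : {i // i ∈ SA}, MvPolynomial.X (Sum.inl i) ^ k i) *
                    ∏ i : {i // i ∈ SB}, MvPolynomial.X (Sum.inr i) ^ n i) ∧
              (∑ i : {i // i ∈ SA}, k i) + (∑ i : {i // i ∈ SB}, n i) ≤ d₁ * (p - 1) ∧
              ((d₁ * (p - 1) : ℤ)) ∣
                ((∑ i : {i // i ∈ SA}, (k i : ℤ) * ((i : ℤ) - (d₁ : ℤ))) -
                  ∑ i : {i // i ∈ SB}, (n i : ℤ) * ((i : ℤ) + (d₁ : ℤ)))} : Set _) :=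
  stmt1_general p hp K d₁ d₂ hd hpd SA SB N hN
end

section
/- Let p be an odd prime, K an algebraically closed field of characteristic p, and d ≥ 2 an integer with p ∤ d and d ≢ 1 (mod p). Let F, F̃ ∈ K[x] be polynomials of degree at most d−2 with zero constant term such that the coefficient of x^i in F and in F̃ is zero whenever p divides i. Suppose α ∈ K with α ≠ 0, β ∈ K, λ ∈ K with λ ≠ 0 and λ^{p−1} = 1, and h ∈ K[x] with deg h ≤ ⌊d/p⌋ satisfy the polynomial identity (αx+β)^d + F(αx+β) = λ·(x^d + F̃(x)) + h(x)^p − h(x). Then λ = α^d, β = 0, h is a constant polynomial whose value c satisfies c^p = c, and α^d·F̃(x) = F(αx). -/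
/-!
Since `deg h ≤ d / p < d - 1` and `p` divides neither `d` nor `d - 1`, the Artin–Schreier
term `h ^ p - h` has no monomials `x ^ d`, `x ^ (d - 1)`; comparing these coefficients gives
`λ = α ^ d` and `d α ^ (d - 1) β = 0`. Then `F(αx) - α ^ d F̃(x) = h ^ p - h`, whose left side
has no monomials of exponent divisible by `p`, so `h.coeff (p m) = h.coeff m ^ p` for all `m`;
at `m = deg h` this forces `h` to be a constant `c` with `c ^ p = c`.
-/

open Polynomial

theorem Nat.div_lt_sub_one_of_not_dvd {p d : ℕ} (hp : 2 ≤ p) (hd : 2 ≤ d) (hpd : ¬ p ∣ d) :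
    d / p < d - 1 := by
  rcases (show d = 2 ∨ 3 ≤ d by omega) with rfl | hd3
  · have hp3 : 2 < p := lt_of_le_of_ne hp (by rintro rfl; exact hpd dvd_rfl)
    rw [Nat.div_eq_of_lt hp3]
    norm_num
  · have := Nat.div_le_div_left hp two_pos (a := d)
    omega

namespace Polynomial

variable {R : Type*}

theorem coeff_pow_expChar [CommSemiring R] (p : ℕ) [ExpChar R p] (f : R[X]) (n : ℕ) :
    (f ^ p).coeff n = if p ∣ n then f.coeff (n / p) ^ p else 0 := by
  rw [← map_frobenius_expand, coeff_map, coeff_expand (expChar_pos R p)]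
  split_ifs <;> simp [frobenius_def, (expChar_pos R p).ne']

theorem coeff_C_mul_X_add_C_pow [CommSemiring R] (a b : R) (n k : ℕ) :
    ((C a * X + C b) ^ n).coeff k = a ^ k * b ^ (n - k) * n.choose k := by
  have hcomp : (X + C b).comp (C a * X) = C a * X + C b := by simp
  rw [← hcomp, ← pow_comp, comp_C_mul_X_coeff, coeff_X_add_C_pow]
  ring

theorem coeff_C_mul_X_add_C_pow_sub_C_mul_X_pow_self [CommRing R] (a b l : R) (d : ℕ) :
    ((C a * X + C b) ^ d - C l * X ^ d).coeff d = a ^ d - l := by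
  simp [coeff_C_mul_X_add_C_pow]

theorem coeff_C_mul_X_add_C_pow_sub_C_mul_X_pow_pred [CommRing R] (a b l : R) {d : ℕ}
    (hd : 1 ≤ d) : ((C a * X + C b) ^ d - C l * X ^ d).coeff (d - 1) = a ^ (d - 1) * b * d := by
  rw [coeff_sub, coeff_C_mul_X_add_C_pow, coeff_C_mul, coeff_X_pow, if_neg (by omega),
    Nat.sub_sub_self hd, Nat.choose_symm hd, Nat.choose_one_right]
  ring

section ArtinSchreier

variable [CommRing R] (p : ℕ) [ExpChar R p]

theorem coeff_pow_expChar_sub_self_of_not_dvd {h : R[X]} {n : ℕ} (hn : ¬ p ∣ n)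
    (hdeg : h.natDegree < n) : (h ^ p - h).coeff n = 0 := by
  rw [coeff_sub, coeff_pow_expChar, if_neg hn, coeff_eq_zero_of_natDegree_lt hdeg, sub_zero]

theorem exists_eq_C_of_coeff_pow_sub_self_eq_zero [IsReduced R] (hp : 1 < p) {h : R[X]}
    (hh : ∀ n, p ∣ n → (h ^ p - h).coeff n = 0) : ∃ c, h = C c ∧ c ^ p = c := by
  have hfrob : ∀ m, h.coeff m ^ p = h.coeff (p * m) := fun m => by
    have := hh (p * m) (dvd_mul_right p m)
    rwa [coeff_sub, coeff_pow_expChar, if_pos (dvd_mul_right p m),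
      Nat.mul_div_cancel_left m (by omega), sub_eq_zero] at this
  have hdeg : h.natDegree = 0 := by
    by_contra hm
    have hlead : h.leadingCoeff ^ p = 0 := by
      rw [leadingCoeff, hfrob, coeff_eq_zero_of_natDegree_lt]
      exact lt_mul_left (Nat.pos_of_ne_zero hm) hp
    have hzero : h = 0 := leadingCoeff_eq_zero.mp (IsReduced.eq_zero _ ⟨p, hlead⟩)
    exact hm (by rw [hzero, natDegree_zero])
  refine ⟨h.coeff 0, eq_C_of_natDegree_eq_zero hdeg, ?_⟩
  simpa using hfrob 0

end ArtinSchreier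

end Polynomial

theorem stmt4_general (p : ℕ) (hp : p.Prime)
    (K : Type*) [Field K] [CharP K p]
    (d : ℕ) (hd2 : 2 ≤ d) (hpd : ¬ p ∣ d) (hd1 : ¬ (d % p = 1 % p))
    (F Ft : K[X])
    (hFdeg : F.degree ≤ (d - 2 : ℕ)) (hFtdeg : Ft.degree ≤ (d - 2 : ℕ))
    (hFp : ∀ i : ℕ, p ∣ i → F.coeff i = 0) (hFtp : ∀ i : ℕ, p ∣ i → Ft.coeff i = 0)
    (α : K) (hα : α ≠ 0) (β : K) (lam : K)
    (h : K[X]) (hh : h.natDegree ≤ d / p)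
    (heq : (C α * X + C β) ^ d + F.comp (C α * X + C β)
        = C lam * (X ^ d + Ft) + h ^ p - h) :
    lam = α ^ d ∧ β = 0 ∧
      (∃ c : K, h = C c ∧ c ^ p = c) ∧
      C (α ^ d) * Ft = F.comp (C α * X) := by
  have := Fact.mk hp
  have hhdeg : h.natDegree < d - 1 :=
    hh.trans_lt (Nat.div_lt_sub_one_of_not_dvd hp.two_le hd2 hpd)
  have hFdeg' : (F.comp (C α * X + C β)).natDegree ≤ d - 2 := by
    rw [natDegree_comp, natDegree_linear hα, mul_one]
    exact natDegree_le_iff_degree_le.mpr hFdeg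
  have hFtdeg' : Ft.natDegree ≤ d - 2 := natDegree_le_iff_degree_le.mpr hFtdeg
  -- Only `(αx + β) ^ d` and `λ x ^ d` reach degrees `d - 1` and `d`, where `h ^ p - h` vanishes.
  have htop : ∀ n, d - 2 < n → ¬ p ∣ n →
      ((C α * X + C β) ^ d - C lam * X ^ d).coeff n = 0 := by
    intro n hn hpn
    have hdiff : (C α * X + C β) ^ d - C lam * X ^ d
        = C lam * Ft - F.comp (C α * X + C β) + (h ^ p - h) := by linear_combination heq
    rw [hdiff, coeff_add, coeff_sub, coeff_C_mul, coeff_eq_zero_of_natDegree_lt (by omega),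
      coeff_eq_zero_of_natDegree_lt (by omega),
      coeff_pow_expChar_sub_self_of_not_dvd p hpn (by omega)]
    simp
  have hlam : lam = α ^ d := by
    have := htop d (by omega) hpd
    rwa [coeff_C_mul_X_add_C_pow_sub_C_mul_X_pow_self, sub_eq_zero, eq_comm] at this
  have hβ : β = 0 := by
    have hpd1 : ¬ p ∣ d - 1 := fun hdvd => hd1 ((Nat.modEq_iff_dvd' (by omega)).mpr hdvd).symm
    have := htop (d - 1) (by omega) hpd1
    rw [coeff_C_mul_X_add_C_pow_sub_C_mul_X_pow_pred _ _ _ (by omega)] at this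
    have hdK : (d : K) ≠ 0 := fun h0 => hpd ((CharP.cast_eq_zero_iff K p d).mp h0)
    simpa [hα, hdK] using this
  subst hlam hβ
  have hAS : F.comp (C α * X) - C (α ^ d) * Ft = h ^ p - h := by
    rw [C_0, add_zero, mul_pow, ← C_pow] at heq
    linear_combination heq
  obtain ⟨c, rfl, hc⟩ := exists_eq_C_of_coeff_pow_sub_self_eq_zero p hp.one_lt fun n hn => by
    rw [← hAS, coeff_sub, coeff_C_mul, comp_C_mul_X_coeff, hFp n hn, hFtp n hn]
    simp
  refine ⟨rfl, rfl, ⟨c, rfl, hc⟩, ?_⟩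
  rw [← C_pow, hc, sub_self, sub_eq_zero] at hAS
  exact hAS.symm

/-- every isomorphism preserving the one-pole standard form with
`d ≢ 1 (mod p)` is `(x,y) ↦ (αx, α^d y)` up to `(x,y) ↦ (x, y+1)`. -/
theorem stmt4 (p : ℕ) (hp : p.Prime) (hodd : Odd p)
    (K : Type*) [Field K] [IsAlgClosed K] [CharP K p]
    (d : ℕ) (hd2 : 2 ≤ d) (hpd : ¬ p ∣ d) (hd1 : ¬ (d % p = 1 % p))
    (F Ft : K[X])
    (hFdeg : F.degree ≤ (d - 2 : ℕ)) (hFtdeg : Ft.degree ≤ (d - 2 : ℕ))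
    (hF0 : F.coeff 0 = 0) (hFt0 : Ft.coeff 0 = 0)
    (hFp : ∀ i : ℕ, p ∣ i → F.coeff i = 0) (hFtp : ∀ i : ℕ, p ∣ i → Ft.coeff i = 0)
    (α : K) (hα : α ≠ 0) (β : K) (lam : K) (hlam : lam ≠ 0) (hlam1 : lam ^ (p - 1) = 1)
    (h : K[X]) (hh : h.natDegree ≤ d / p)
    (heq : (C α * X + C β) ^ d + F.comp (C α * X + C β)
        = C lam * (X ^ d + Ft) + h ^ p - h) :
    lam = α ^ d ∧ β = 0 ∧
      (∃ c : K, h = C c ∧ c ^ p = c) ∧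
      C (α ^ d) * Ft = F.comp (C α * X) :=
  stmt4_general p hp K d hd2 hpd hd1 F Ft hFdeg hFtdeg hFp hFtp α hα β lam h hh heq
end

section
/- Let p be an odd prime, K a field of characteristic p, and d an integer with d ≡ 1 (mod p) and d ≥ p+1. Let a_1, …, a_{d−2} ∈ K with a_j = 0 whenever p divides j, let A ⊆ K be the 𝔽_p-subalgebra of K generated by a_1, …, a_{d−2}, let α ∈ K with α ≠ 0, and let β ∈ K. Suppose h_0, h_1, …, h_{⌊(d−1)/p⌋} ∈ K satisfy: for every i with 0 ≤ i ≤ (d−1)/p², α^{ip}·( C(d, ip)·β^{d−ip} + Σ_{j=1}^{d−ip−2} a_{ip+j}·β^j ) = h_i^p − h_{ip}, and for every i with (d−1)/p² < i ≤ (d−1)/p, α^{ip}·( C(d, ip)·β^{d−ip} + Σ_{j=1}^{d−ip−2} a_{ip+j}·β^j ) = h_i^p, where C(d, ip) denotes the image in K of the binomial coefficient. Then for every i with 1 ≤ i ≤ (d−1)/p, setting j_i = ⌊log_p((d−1)/i)⌋, there exists a polynomial F_i ∈ K[x] of degree at most (d−ip)·p^{j_i−1} − 1, all of whose coefficients lie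 in A, such that h_i^{p^{j_i}} = α^{i·p^{j_i}}·β·F_i(β). -/
/-!
Comparing coefficients writes `h_i ^ p` as `α ^ (i p) P_i(β) + h_{ip}`, where `P_i` has
coefficients in `A` and no constant term, and the term `h_{ip}` is absent once
`i > (d - 1) / p²`. Since `x ↦ x ^ p ^ k` is additive in characteristic `p`, induction along
the chain `i, ip, ip², …` writes `h_i ^ p ^ j_i` as `α ^ (i p ^ j_i)` times a polynomial in `β`
without constant term, and dividing that polynomial by `X` gives `F_i`.
-/

open Polynomial

namespace Polynomial

theorem coeff_mem_of_mem_lifts_subtype {R : Type*} [Ring R] {A : Subring R} {Q : R[X]}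
    (hQ : Q ∈ lifts A.subtype) (m : ℕ) : Q.coeff m ∈ A := by
  obtain ⟨c, hc⟩ := (lifts_iff_coeff_lifts Q).mp hQ m
  exact hc ▸ c.2

theorem eval_eq_mul_eval_divX {R : Type*} [CommSemiring R] {Q : R[X]} (hQ : X ∣ Q) (β : R) :
    Q.eval β = β * Q.divX.eval β := by
  conv_lhs => rw [← X_mul_divX_add Q, X_dvd_iff.mp hQ]
  simp

end Polynomial

namespace Nat

theorem mul_pow_log_div_le (b : ℕ) {n i : ℕ} (hi : 0 < i) (hin : i ≤ n) :
    i * b ^ log b (n / i) ≤ n := by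
  rw [mul_comm, ← Nat.le_div_iff_mul_le hi]
  exact pow_log_le_self b (Nat.div_pos hin hi).ne'

theorem lt_mul_pow_succ_log_div {b : ℕ} (hb : 1 < b) (n : ℕ) {i : ℕ} (hi : 0 < i) :
    n < i * b ^ (log b (n / i) + 1) := by
  rw [mul_comm, ← Nat.div_lt_iff_lt_mul hi]
  exact lt_pow_succ_log_self hb _

end Nat

namespace ArtinSchreier

variable {K : Type*} [Field K]

noncomputable def coeffPoly (d : ℕ) (a : ℕ → K) (n : ℕ) : K[X] :=
  C (d.choose n : K) * X ^ (d - n) + ∑ j ∈ Finset.Icc 1 (d - n - 2), C (a (n + j)) * X ^ j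

section coeffPoly

variable (d : ℕ) (a : ℕ → K) (n : ℕ)

theorem eval_coeffPoly (β : K) :
    (coeffPoly d a n).eval β =
      (d.choose n : K) * β ^ (d - n) + ∑ j ∈ Finset.Icc 1 (d - n - 2), a (n + j) * β ^ j := by
  simp [coeffPoly, eval_finsetSum]

theorem natDegree_coeffPoly_le : (coeffPoly d a n).natDegree ≤ d - n := by
  refine natDegree_add_le_of_degree_le (natDegree_C_mul_X_pow_le _ _) ?_
  refine natDegree_sum_le_of_forall_le _ _ fun j hj => (natDegree_C_mul_X_pow_le _ _).trans ?_
  have := (Finset.mem_Icc.mp hj).2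
  omega

theorem X_dvd_coeffPoly (hn : n < d) : X ∣ coeffPoly d a n := by
  refine dvd_add (dvd_mul_of_dvd_right (dvd_pow_self X (by omega)) _)
    (Finset.dvd_sum fun j hj => dvd_mul_of_dvd_right (dvd_pow_self X ?_) _)
  have := (Finset.mem_Icc.mp hj).1
  omega

theorem coeffPoly_mem_lifts {A : Subring K} (ha : ∀ j, 1 ≤ j → j ≤ d - 2 → a j ∈ A) :
    coeffPoly d a n ∈ lifts A.subtype := by
  refine add_mem (mul_mem (C_mem_lifts A.subtype ⟨_, natCast_mem A _⟩) (X_pow_mem_lifts _ _))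
    (sum_mem fun j hj => ?_)
  have := Finset.mem_Icc.mp hj
  exact mul_mem (C_mem_lifts A.subtype ⟨_, ha (n + j) (by omega) (by omega)⟩)
    (X_pow_mem_lifts _ _)

end coeffPoly

/-- The bounds on `i` say that `Nat.log p ((d - 1) / i) = k + 1`. -/
theorem exists_pow_pow_eq_eval {p : ℕ} [ExpChar K p] {d : ℕ} {a : ℕ → K} {A : Subring K}
    (haA : ∀ j, 1 ≤ j → j ≤ d - 2 → a j ∈ A) {α β : K} {h : ℕ → K}
    (hrec : ∀ i, i * p ^ 2 ≤ d - 1 →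
      α ^ (i * p) * (coeffPoly d a (i * p)).eval β = h i ^ p - h (i * p))
    (hlast : ∀ i, i * p ≤ d - 1 → d - 1 < i * p ^ 2 →
      α ^ (i * p) * (coeffPoly d a (i * p)).eval β = h i ^ p)
    (k : ℕ) : ∀ i, i * p ^ (k + 1) ≤ d - 1 → d - 1 < i * p ^ (k + 2) →
      ∃ Q ∈ lifts A.subtype, X ∣ Q ∧ Q.natDegree ≤ (d - i * p) * p ^ k ∧
        h i ^ p ^ (k + 1) = α ^ (i * p ^ (k + 1)) * Q.eval β := by
  have hp := expChar_pos K p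
  have hip_lt : ∀ i m, i * p ^ (m + 1) ≤ d - 1 → d - 1 < i * p ^ (m + 2) → i * p < d := by
    intro i m hle hlt
    have hi : 0 < i := Nat.pos_of_ne_zero (by rintro rfl; simp at hlt)
    have : i * p ≤ i * p ^ (m + 1) := Nat.mul_le_mul_left _ (Nat.le_self_pow (by omega) _)
    have := Nat.mul_pos hi hp
    omega
  induction k with
  | zero =>
    intro i hle hlt
    refine ⟨coeffPoly d a (i * p), coeffPoly_mem_lifts d a _ haA,
      X_dvd_coeffPoly d a _ (hip_lt i 0 hle hlt),
      by simpa using natDegree_coeffPoly_le d a (i * p), ?_⟩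
    rw [zero_add, pow_one] at hle
    simpa using (hlast i hle hlt).symm
  | succ k ih =>
    intro i hle hlt
    have hip : ∀ m, i * p * p ^ m = i * p ^ (m + 1) := fun m => by ring
    obtain ⟨Q, hQA, hQX, hQdeg, hQ⟩ := ih (i * p) (by rwa [hip]) (by rwa [hip])
    set P := coeffPoly d a (i * p)
    refine ⟨P ^ p ^ (k + 1) + Q, add_mem (pow_mem (coeffPoly_mem_lifts d a _ haA) _) hQA,
      dvd_add (dvd_pow (X_dvd_coeffPoly d a _ ?_) (by positivity)) hQX, ?_, ?_⟩
    · exact hip_lt i (k + 1) hle hlt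
    · refine natDegree_add_le_of_degree_le
        (natDegree_pow_le.trans ((Nat.mul_le_mul_left _ (natDegree_coeffPoly_le d a _)).trans_eq
          (mul_comm _ _))) (hQdeg.trans ?_)
      exact Nat.mul_le_mul (Nat.sub_le_sub_left (Nat.le_mul_of_pos_right _ hp) d)
        (Nat.pow_le_pow_right hp (by omega))
    · have hsq : i * p ^ 2 ≤ d - 1 :=
        (Nat.mul_le_mul_left _ (Nat.pow_le_pow_right hp (by omega))).trans hle
      calc h i ^ p ^ (k + 2) = (h i ^ p) ^ p ^ (k + 1) := by rw [← pow_mul, ← pow_succ']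
        _ = (α ^ (i * p) * P.eval β + h (i * p)) ^ p ^ (k + 1) := by rw [hrec i hsq]; ring
        _ = (α ^ (i * p) * P.eval β) ^ p ^ (k + 1) + h (i * p) ^ p ^ (k + 1) :=
          add_pow_expChar_pow ..
        _ = α ^ (i * p ^ (k + 2)) * (P ^ p ^ (k + 1) + Q).eval β := by
          rw [hQ, eval_add, eval_pow]; ring

end ArtinSchreier

theorem stmt6_general (p : ℕ) (hp : p.Prime)
    (K : Type*) [Field K] [CharP K p]
    (d : ℕ)
    (a : ℕ → K)
    (A : Subring K) (hA : A = Subring.closure {x : K | ∃ j : ℕ, 1 ≤ j ∧ j ≤ d - 2 ∧ x = a j})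
    (α : K) (β : K)
    (h : ℕ → K)
    (heq1 : ∀ i : ℕ, i ≤ (d - 1) / p ^ 2 →
      α ^ (i * p) *
          ((d.choose (i * p) : K) * β ^ (d - i * p) +
            ∑ j ∈ Finset.Icc 1 (d - i * p - 2), a (i * p + j) * β ^ j)
        = h i ^ p - h (i * p))
    (heq2 : ∀ i : ℕ, (d - 1) / p ^ 2 < i → i ≤ (d - 1) / p →
      α ^ (i * p) *
          ((d.choose (i * p) : K) * β ^ (d - i * p) +
            ∑ j ∈ Finset.Icc 1 (d - i * p - 2), a (i * p + j) * β ^ j)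
        = h i ^ p) :
    ∀ i : ℕ, 1 ≤ i → i ≤ (d - 1) / p →
      ∃ F : K[X],
        F.natDegree ≤ (d - i * p) * p ^ (Nat.log p ((d - 1) / i) - 1) - 1 ∧
        (∀ m : ℕ, F.coeff m ∈ A) ∧
        h i ^ (p ^ Nat.log p ((d - 1) / i))
          = α ^ (i * p ^ Nat.log p ((d - 1) / i)) * β * F.eval β := by
  have : Fact p.Prime := ⟨hp⟩
  have hp2 : 0 < p ^ 2 := pow_pos hp.pos 2
  have haA : ∀ j, 1 ≤ j → j ≤ d - 2 → a j ∈ A := fun j h1 h2 =>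
    hA ▸ Subring.subset_closure ⟨j, h1, h2, rfl⟩
  have hrec : ∀ i, i * p ^ 2 ≤ d - 1 →
      α ^ (i * p) * (ArtinSchreier.coeffPoly d a (i * p)).eval β = h i ^ p - h (i * p) :=
    fun i hle => by
    rw [ArtinSchreier.eval_coeffPoly]
    exact heq1 i ((Nat.le_div_iff_mul_le hp2).mpr hle)
  have hlast : ∀ i, i * p ≤ d - 1 → d - 1 < i * p ^ 2 →
      α ^ (i * p) * (ArtinSchreier.coeffPoly d a (i * p)).eval β = h i ^ p :=
    fun i hle hlt => by
    rw [ArtinSchreier.eval_coeffPoly]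
    exact heq2 i ((Nat.div_lt_iff_lt_mul hp2).mpr hlt) ((Nat.le_div_iff_mul_le hp.pos).mpr hle)
  intro i hi hid
  set L := Nat.log p ((d - 1) / i)
  have hip : i * p ≤ d - 1 := (Nat.le_div_iff_mul_le hp.pos).mp hid
  have hL : 1 ≤ L := Nat.le_log_of_pow_le hp.one_lt
    ((Nat.le_div_iff_mul_le hi).mpr (by rwa [pow_one, mul_comm]))
  obtain ⟨Q, hQA, hQX, hQdeg, hQ⟩ :=
    ArtinSchreier.exists_pow_pow_eq_eval haA hrec hlast (L - 1) i
      (by rw [Nat.sub_add_cancel hL]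
          exact Nat.mul_pow_log_div_le p hi ((Nat.le_mul_of_pos_right i hp.pos).trans hip))
      (by rw [show L - 1 + 2 = L + 1 by omega]
          exact Nat.lt_mul_pow_succ_log_div hp.one_lt _ hi)
  rw [Nat.sub_add_cancel hL] at hQ
  refine ⟨Q.divX, ?_, fun m => ?_, ?_⟩
  · rw [natDegree_divX_eq_natDegree_tsub_one]
    omega
  · rw [coeff_divX]
    exact coeff_mem_of_mem_lifts_subtype hQA _
  · rw [hQ, mul_assoc, ← eval_eq_mul_eval_divX hQX]

/-- the coefficients `h_i` of the auxiliary polynomial `h(x)` satisfy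
`h_i^{p^{j_i}} = α^{i p^{j_i}} β F_i(β)` with `F_i` of controlled degree and with
coefficients in the `𝔽_p`-subalgebra `A` of `K` generated by the `a_j` (which, since
`K` has characteristic `p`, is the subring of `K` generated by the `a_j`). -/
theorem stmt6 (p : ℕ) (hp : p.Prime) (hodd : Odd p)
    (K : Type*) [Field K] [CharP K p]
    (d : ℕ) (hd1 : d % p = 1 % p) (hdp : p + 1 ≤ d)
    (a : ℕ → K) (ha : ∀ j : ℕ, 1 ≤ j → j ≤ d - 2 → p ∣ j → a j = 0)
    (A : Subring K) (hA : A = Subring.closure {x : K | ∃ j : ℕ, 1 ≤ j ∧ j ≤ d - 2 ∧ x = a j})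
    (α : K) (hα : α ≠ 0) (β : K)
    (h : ℕ → K)
    (heq1 : ∀ i : ℕ, i ≤ (d - 1) / p ^ 2 →
      α ^ (i * p) *
          ((d.choose (i * p) : K) * β ^ (d - i * p) +
            ∑ j ∈ Finset.Icc 1 (d - i * p - 2), a (i * p + j) * β ^ j)
        = h i ^ p - h (i * p))
    (heq2 : ∀ i : ℕ, (d - 1) / p ^ 2 < i → i ≤ (d - 1) / p →
      α ^ (i * p) *
          ((d.choose (i * p) : K) * β ^ (d - i * p) +
            ∑ j ∈ Finset.Icc 1 (d - i * p - 2), a (i * p + j) * β ^ j)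
        = h i ^ p) :
    ∀ i : ℕ, 1 ≤ i → i ≤ (d - 1) / p →
      ∃ F : K[X],
        F.natDegree ≤ (d - i * p) * p ^ (Nat.log p ((d - 1) / i) - 1) - 1 ∧
        (∀ m : ℕ, F.coeff m ∈ A) ∧
        h i ^ (p ^ Nat.log p ((d - 1) / i))
          = α ^ (i * p ^ Nat.log p ((d - 1) / i)) * β * F.eval β :=
  stmt6_general p hp K d a A hA α β h heq1 heq2
end

section
/- Let K be a field of characteristic p > 0 and h ∈ K[x] a polynomial such that for every natural number i, the coefficient of x^{p·i} in h(x)^p − h(x) is zero. Then h is a constant polynomial, and its constant value c satisfies c^p = c (that is, c lies in the prime subfield of K). -/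
/-!
Since `h ^ p = map (frobenius) (expand p h)`, the hypothesis says `h_i ^ p = h_{p i}` for all `i`.
Iterating, `h_i ^ (p ^ k) = h_{p ^ k i}`, which is zero for `i ≥ 1` once `p ^ k` exceeds the degree;
a field has no nonzero nilpotents, so `h = C h_0`, and `i = 0` gives `h_0 ^ p = h_0`.
-/

open Polynomial

namespace Polynomial

theorem coeff_pow_expChar_mul {R : Type*} [CommSemiring R] (p : ℕ) [ExpChar R p] (f : R[X])
    (i : ℕ) : (f ^ p).coeff (p * i) = f.coeff i ^ p := by
  rw [← map_frobenius_expand, coeff_map, coeff_expand_mul' (expChar_pos R p), frobenius_def]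

theorem coeff_pow_pow_eq_coeff_pow_mul {R : Type*} [Semiring R] {f : R[X]} {n : ℕ}
    (hf : ∀ i, f.coeff i ^ n = f.coeff (n * i)) (k i : ℕ) :
    f.coeff i ^ n ^ k = f.coeff (n ^ k * i) := by
  induction k with
  | zero => simp
  | succ k ih => rw [pow_succ, pow_mul, ih, hf, ← mul_assoc, mul_comm n]

theorem eq_C_of_coeff_pow_eq_coeff_mul {R : Type*} [Semiring R] [IsReduced R] {f : R[X]} {n : ℕ}
    (hn : 1 < n) (hf : ∀ i, f.coeff i ^ n = f.coeff (n * i)) : f = C (f.coeff 0) := by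
  refine eq_C_of_natDegree_le_zero (natDegree_le_iff_coeff_eq_zero.mpr fun i hi => ?_)
  have hdeg : f.natDegree < n ^ f.natDegree * i :=
    (Nat.lt_pow_self hn).trans_le (Nat.le_mul_of_pos_right _ hi)
  refine IsNilpotent.eq_zero ⟨n ^ f.natDegree, ?_⟩
  rw [coeff_pow_pow_eq_coeff_pow_mul hf, coeff_eq_zero_of_natDegree_lt hdeg]

end Polynomial

/-- if `h(x)^p − h(x)` has no monomials of exponent divisible by `p`,
then `h` is a constant lying in the prime subfield. -/
theorem stmt7 (p : ℕ) (hp : 0 < p)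
    (K : Type*) [Field K] [CharP K p]
    (h : K[X]) (hcoeff : ∀ i : ℕ, (h ^ p - h).coeff (p * i) = 0) :
    ∃ c : K, h = C c ∧ c ^ p = c := by
  have hprime : Fact p.Prime := ⟨(CharP.char_is_prime_or_zero K p).resolve_right hp.ne'⟩
  have hfrob (i : ℕ) : h.coeff i ^ p = h.coeff (p * i) := by
    simpa only [coeff_sub, coeff_pow_expChar_mul, sub_eq_zero] using hcoeff i
  refine ⟨h.coeff 0, eq_C_of_coeff_pow_eq_coeff_mul hprime.out.one_lt hfrob, ?_⟩
  simpa only [mul_zero] using hfrob 0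
end

section
/- Let K be a field and θ ∈ K with θ ≠ 0, θ ≠ 1, and θ² − θ + 1 ≠ 0. For a quadruple (a, b, c, e) ∈ K⁴ define J₁ = (θ²−θ+1)·(a² + b²/θ² + c²/(1−θ)² + e²/(θ²(1−θ)²)), J₂′ = ab − bc + ca + e·(a − b/θ² − c/(θ−1)²), J₂ = a²b² + b²c² + c²a² + e²·(a² + b²/θ⁴ + c²/(θ−1)⁴), J₃ = a²b²c² + a²b²e²/θ² + a²c²e²/(θ−1)² + b²c²e²/(θ²(1−θ)²), and J₄ = abce/(1−θ+θ²). Then each of J₁, J₂′, J₂, J₃, J₄ takes the same value at (a, b, c, e, θ) as at each of the three transformed tuples M₁(a,b,c,e,θ) = (b, a, −c, −e/θ², 1/θ), M₂(a,b,c,e,θ) = (c, −b, a, −e/(θ−1)², θ/(θ−1)), and M₃(a,b,c,e,θ) = (−e/(θ(θ−1)), b(θ−1)/θ, cθ/(θ−1), aθ(1−θ), 1−θ). (In particular, the new value of θ under each Mᵢ is again ≠ 0, ≠ 1, and has θ²−θ+1 ≠ 0, so all expressions are defined.) -/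
noncomputable section

variable {K : Type*} [Field K]

/-- The invariant `J₁`. -/
def J1 (a b c e θ : K) : K :=
  (θ ^ 2 - θ + 1) * (a ^ 2 + b ^ 2 / θ ^ 2 + c ^ 2 / (1 - θ) ^ 2 +
    e ^ 2 / (θ ^ 2 * (1 - θ) ^ 2))

/-- The invariant `J₂′`. -/
def J2' (a b c e θ : K) : K :=
  a * b - b * c + c * a + e * (a - b / θ ^ 2 - c / (θ - 1) ^ 2)

/-- The invariant `J₂`. -/
def J2 (a b c e θ : K) : K :=
  a ^ 2 * b ^ 2 + b ^ 2 * c ^ 2 + c ^ 2 * a ^ 2 +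
    e ^ 2 * (a ^ 2 + b ^ 2 / θ ^ 4 + c ^ 2 / (θ - 1) ^ 4)

/-- The invariant `J₃`. -/
def J3 (a b c e θ : K) : K :=
  a ^ 2 * b ^ 2 * c ^ 2 + a ^ 2 * b ^ 2 * e ^ 2 / θ ^ 2 +
    a ^ 2 * c ^ 2 * e ^ 2 / (θ - 1) ^ 2 + b ^ 2 * c ^ 2 * e ^ 2 / (θ ^ 2 * (1 - θ) ^ 2)

/-- The invariant `J₄`. -/
def J4 (a b c e θ : K) : K :=
  a * b * c * e / (1 - θ + θ ^ 2)

/-- The tuple of all five invariants. -/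
def Jall (a b c e θ : K) : K × K × K × K × K :=
  (J1 a b c e θ, J2' a b c e θ, J2 a b c e θ, J3 a b c e θ, J4 a b c e θ)

/-! Once the denominators, powers of θ and θ - 1, are cleared, the invariance of each `Jᵢ`
under each `Mᵢ` is a polynomial identity. The new value of θ is again admissible because
θ² - θ + 1 gets multiplied by θ⁻², (θ - 1)⁻² and 1 under `M₁`, `M₂`, `M₃` respectively. -/

def Admissible (θ : K) : Prop :=
  θ ≠ 0 ∧ θ ≠ 1 ∧ θ ^ 2 - θ + 1 ≠ 0

namespace Admissible

variable {θ : K}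

theorem one_div (h : Admissible θ) : Admissible (1 / θ) := by
  obtain ⟨h0, h1, h2⟩ := h
  have hq : (1 / θ) ^ 2 - 1 / θ + 1 = (θ ^ 2 - θ + 1) / θ ^ 2 := by field_simp; ring
  refine ⟨one_div_ne_zero h0, fun h => h1 ?_, by rw [hq]; exact div_ne_zero h2 (pow_ne_zero 2 h0)⟩
  exact ((div_eq_one_iff_eq h0).mp h).symm

theorem div_sub_one (h : Admissible θ) : Admissible (θ / (θ - 1)) := by
  obtain ⟨h0, h1, h2⟩ := h
  have hm : θ - 1 ≠ 0 := sub_ne_zero.mpr h1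
  have hq : (θ / (θ - 1)) ^ 2 - θ / (θ - 1) + 1 = (θ ^ 2 - θ + 1) / (θ - 1) ^ 2 := by
    field_simp; ring
  refine ⟨div_ne_zero h0 hm, fun h => ?_, by rw [hq]; exact div_ne_zero h2 (pow_ne_zero 2 hm)⟩
  exact one_ne_zero (sub_eq_self.mp ((div_eq_one_iff_eq hm).mp h).symm)

theorem one_sub (h : Admissible θ) : Admissible (1 - θ) := by
  obtain ⟨h0, h1, h2⟩ := h
  refine ⟨sub_ne_zero.mpr h1.symm, fun h => h0 (sub_eq_self.mp h), ?_⟩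
  rwa [show (1 - θ) ^ 2 - (1 - θ) + 1 = θ ^ 2 - θ + 1 by ring]

end Admissible

section Invariance

variable {a b c e θ : K}

theorem Jall_M1 (h0 : θ ≠ 0) : Jall b a (-c) (-e / θ ^ 2) (1 / θ) = Jall a b c e θ := by
  simp only [Jall, J1, J2', J2, J3, J4, Prod.mk.injEq]
  refine ⟨?_, ?_, ?_, ?_, ?_⟩ <;> field_simp <;> ring

theorem Jall_M2 (h1 : θ ≠ 1) :
    Jall c (-b) a (-e / (θ - 1) ^ 2) (θ / (θ - 1)) = Jall a b c e θ := by
  have hm : θ - 1 ≠ 0 := sub_ne_zero.mpr h1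
  simp only [Jall, J1, J2', J2, J3, J4, Prod.mk.injEq]
  refine ⟨?_, ?_, ?_, ?_, ?_⟩ <;> field_simp <;> ring

theorem Jall_M3 (h0 : θ ≠ 0) (h1 : θ ≠ 1) :
    Jall (-e / (θ * (θ - 1))) (b * (θ - 1) / θ) (c * θ / (θ - 1)) (a * θ * (1 - θ)) (1 - θ) =
      Jall a b c e θ := by
  have hm : θ - 1 ≠ 0 := sub_ne_zero.mpr h1
  simp only [Jall, J1, J2', J2, J3, J4, Prod.mk.injEq, sub_sub_cancel_left, sub_sub_cancel]
  refine ⟨?_, ?_, ?_, ?_, ?_⟩ <;> field_simp <;> ring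

end Invariance

/-- the rational functions `J₁, J₂′, J₂, J₃, J₄` are invariant under the
three generators `M₁, M₂, M₃` of the group of order 24 acting on the parameters
`(a, b, c, e, θ)` of an Artin–Schreier curve with four poles of order one. -/
theorem stmt9 (a b c e θ : K) (h0 : θ ≠ 0) (h1 : θ ≠ 1) (h2 : θ ^ 2 - θ + 1 ≠ 0) :
    -- M₁ : (a,b,c,e,θ) ↦ (b, a, −c, −e/θ², 1/θ)
    ((1 / θ ≠ 0 ∧ 1 / θ ≠ 1 ∧ (1 / θ) ^ 2 - 1 / θ + 1 ≠ 0) ∧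
      Jall b a (-c) (-e / θ ^ 2) (1 / θ) = Jall a b c e θ) ∧
    -- M₂ : (a,b,c,e,θ) ↦ (c, −b, a, −e/(θ−1)², θ/(θ−1))
    ((θ / (θ - 1) ≠ 0 ∧ θ / (θ - 1) ≠ 1 ∧
        (θ / (θ - 1)) ^ 2 - θ / (θ - 1) + 1 ≠ 0) ∧
      Jall c (-b) a (-e / (θ - 1) ^ 2) (θ / (θ - 1)) = Jall a b c e θ) ∧
    -- M₃ : (a,b,c,e,θ) ↦ (−e/(θ(θ−1)), b(θ−1)/θ, cθ/(θ−1), aθ(1−θ), 1−θ)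
    ((1 - θ ≠ 0 ∧ 1 - θ ≠ 1 ∧ (1 - θ) ^ 2 - (1 - θ) + 1 ≠ 0) ∧
      Jall (-e / (θ * (θ - 1))) (b * (θ - 1) / θ) (c * θ / (θ - 1)) (a * θ * (1 - θ))
        (1 - θ) = Jall a b c e θ) := by
  have h : Admissible θ := ⟨h0, h1, h2⟩
  exact ⟨⟨h.one_div, Jall_M1 h0⟩, ⟨h.div_sub_one, Jall_M2 h1⟩, ⟨h.one_sub, Jall_M3 h0 h1⟩⟩

end
end

section
/- Let K be a field, d ≥ 1 an integer, a₁, …, a_d ∈ K with a_d = 1, and b₁, …, b_d ∈ K with b_d ≠ 0. Let α ∈ K with α ≠ 0 and set λ = α^d·b_d. Define the polynomials F(x) = Σ_{i=1}^{d} a_i x^i, G(x) = Σ_{i=1}^{d} b_i x^i, F′(x) = Σ_{i=1}^{d} (α^i b_i/λ)·x^i, and G′(x) = Σ_{i=1}^{d} (a_i/(λα^i))·x^i. Then F′ is monic of degree d, and in the rational function field K(x) one has F(1/(αx)) + G(αx) = λ·( F′(x) + G′(1/x) ). -/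
open Polynomial

namespace Polynomial

variable {R A : Type*} [CommSemiring R]

theorem monic_sum_C_mul_X_pow_of_top_coeff_eq_one [Nontrivial R] {s : Finset ℕ} {d : ℕ}
    (hd : d ∈ s) (hle : ∀ i ∈ s, i ≤ d) {c : ℕ → R} (hc : c d = 1) :
    (∑ i ∈ s, C (c i) * X ^ i).Monic ∧ (∑ i ∈ s, C (c i) * X ^ i).natDegree = d := by
  have hdeg : (∑ i ∈ s, C (c i) * X ^ i).natDegree ≤ d :=
    natDegree_sum_le_of_forall_le _ _ fun i hi =>
      (natDegree_C_mul_X_pow_le _ _).trans (hle i hi)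
  have hcoeff : (∑ i ∈ s, C (c i) * X ^ i).coeff d = 1 := by
    rw [finsetSum_coeff, Finset.sum_eq_single_of_mem d hd fun i _ hi => by
      rw [coeff_C_mul_X_pow, if_neg hi.symm], coeff_C_mul_X_pow, if_pos rfl, hc]
  exact ⟨monic_of_natDegree_le_of_coeff_eq_one d hdeg hcoeff,
    natDegree_eq_of_le_of_coeff_ne_zero hdeg (hcoeff ▸ one_ne_zero)⟩

variable [CommSemiring A] [Algebra R A]

theorem aeval_algebraMap_mul_sum_C_mul_X_pow {s : Finset ℕ} {c c' : ℕ → R} {u v : R}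
    (hcc' : ∀ i ∈ s, c i * u ^ i = v * c' i) (y : A) :
    aeval (algebraMap R A u * y) (∑ i ∈ s, C (c i) * X ^ i) =
      algebraMap R A v * aeval y (∑ i ∈ s, C (c' i) * X ^ i) := by
  simp only [map_sum, map_mul, map_pow, aeval_C, aeval_X, Finset.mul_sum]
  refine Finset.sum_congr rfl fun i hi => ?_
  rw [mul_pow, ← mul_assoc, ← map_pow, ← map_mul, hcc' i hi, map_mul, mul_assoc]

end Polynomial

theorem stmt12_general (K : Type*) [Field K] (d : ℕ) (hd : 1 ≤ d)
    (a b : ℕ → K) (hbd : b d ≠ 0)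
    (α : K) (hα : α ≠ 0) (lam : K) (hlam : lam = α ^ d * b d)
    (F G F' G' : K[X])
    (hF : F = ∑ i ∈ Finset.Icc 1 d, C (a i) * X ^ i)
    (hG : G = ∑ i ∈ Finset.Icc 1 d, C (b i) * X ^ i)
    (hF' : F' = ∑ i ∈ Finset.Icc 1 d, C (α ^ i * b i / lam) * X ^ i)
    (hG' : G' = ∑ i ∈ Finset.Icc 1 d, C (a i / (lam * α ^ i)) * X ^ i) :
    F'.Monic ∧ F'.natDegree = d ∧
      Polynomial.aeval ((RatFunc.C α * RatFunc.X)⁻¹ : RatFunc K) F +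
          Polynomial.aeval (RatFunc.C α * RatFunc.X : RatFunc K) G
        = RatFunc.C lam *
            (Polynomial.aeval (RatFunc.X : RatFunc K) F' +
              Polynomial.aeval ((RatFunc.X)⁻¹ : RatFunc K) G') := by
  have hlam0 : lam ≠ 0 := hlam ▸ mul_ne_zero (pow_ne_zero d hα) hbd
  have hF'd : α ^ d * b d / lam = 1 := by rw [← hlam, div_self hlam0]
  have hFscaled :
      aeval (RatFunc.C α * RatFunc.X)⁻¹ F = RatFunc.C lam * aeval RatFunc.X⁻¹ G' := by
    rw [mul_inv, ← map_inv₀, ← RatFunc.algebraMap_eq_C, hF, hG']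
    exact aeval_algebraMap_mul_sum_C_mul_X_pow (fun i _ => by rw [inv_pow]; field_simp) _
  have hGscaled : aeval (RatFunc.C α * RatFunc.X) G = RatFunc.C lam * aeval RatFunc.X F' := by
    rw [← RatFunc.algebraMap_eq_C, hG, hF']
    exact aeval_algebraMap_mul_sum_C_mul_X_pow (fun i _ => by field_simp) _
  obtain ⟨hmonic, hdeg⟩ := hF' ▸ monic_sum_C_mul_X_pow_of_top_coeff_eq_one
    (Finset.mem_Icc.2 ⟨hd, le_rfl⟩) (fun i hi => (Finset.mem_Icc.1 hi).2) hF'd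
  exact ⟨hmonic, hdeg, by rw [hFscaled, hGscaled]; ring⟩

/-- the pole-swapping isomorphism for two poles of equal order `d`
acts on the coefficients by `(a_i, b_i) ↦ (α^i b_i/λ, a_i/(λ α^i))`:
`F(1/(αx)) + G(αx) = λ (F′(x) + G′(1/x))` in `K(x)`, with `F′` monic of degree `d`. -/
theorem stmt12 (K : Type*) [Field K] (d : ℕ) (hd : 1 ≤ d)
    (a b : ℕ → K) (had : a d = 1) (hbd : b d ≠ 0)
    (α : K) (hα : α ≠ 0) (lam : K) (hlam : lam = α ^ d * b d)
    (F G F' G' : K[X])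
    (hF : F = ∑ i ∈ Finset.Icc 1 d, C (a i) * X ^ i)
    (hG : G = ∑ i ∈ Finset.Icc 1 d, C (b i) * X ^ i)
    (hF' : F' = ∑ i ∈ Finset.Icc 1 d, C (α ^ i * b i / lam) * X ^ i)
    (hG' : G' = ∑ i ∈ Finset.Icc 1 d, C (a i / (lam * α ^ i)) * X ^ i) :
    F'.Monic ∧ F'.natDegree = d ∧
      Polynomial.aeval ((RatFunc.C α * RatFunc.X)⁻¹ : RatFunc K) F +
          Polynomial.aeval (RatFunc.C α * RatFunc.X : RatFunc K) G
        = RatFunc.C lam *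
            (Polynomial.aeval (RatFunc.X : RatFunc K) F' +
              Polynomial.aeval ((RatFunc.X)⁻¹ : RatFunc K) G') :=
  stmt12_general K d hd a b hbd α hα lam hlam F G F' G' hF hG hF' hG'
end
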